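/- If (A, ∘) is a Novikov superalgebra and [u,v] = u∘v − (−1)^{|u||v|} v∘u is the supercommutator, then (A, [·,·], ∘) is a super Gel'fand-Dorfman algebra; in particular the compatibility identity [w∘u, v] − (−1)^{ij}[w∘v, u] + [w,u]∘v − (−1)^{ij}[w,v]∘u − w∘[u,v] = 0 holds for all homogeneous u ∈ A_i, v ∈ A_j and w ∈ A. -/

import Mathlib

/-- A Novikov superalgebra over ℂ: a ℤ₂-graded vector space `V = A 0 ⊕ A 1`
with a bilinear product respecting the grading, satisfying the graded
left-symmetry and graded right-commutativity identities. -/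
structure NovikovSuperAlgebra (V : Type*) [AddCommGroup V] [Module ℂ V] where
  mul : V →ₗ[ℂ] V →ₗ[ℂ] V
  grading : ZMod 2 → Submodule ℂ V
  spanning : ∀ x : V, ∃ x0 ∈ grading 0, ∃ x1 ∈ grading 1, x = x0 + x1
  indep : ∀ x : V, x ∈ grading 0 → x ∈ grading 1 → x = 0
  mul_mem : ∀ i j : ZMod 2, ∀ u ∈ grading i, ∀ v ∈ grading j, mul u v ∈ grading (i + j)
  super_left_sym : ∀ i j : ZMod 2, ∀ u ∈ grading i, ∀ v ∈ grading j, ∀ w : V,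
    mul (mul u v) w - mul u (mul v w)
      = ((-1 : ℂ) ^ (i.val * j.val)) • (mul (mul v u) w - mul v (mul u w))
  super_right_comm : ∀ i j : ZMod 2, ∀ u ∈ grading i, ∀ v ∈ grading j, ∀ w : V,
    mul (mul w u) v = ((-1 : ℂ) ^ (i.val * j.val)) • mul (mul w v) u

/-- The (ungraded) Novikov algebra identities for a bilinear product. -/
def IsNovikovMul {V : Type*} [AddCommGroup V] [Module ℂ V]
    (mul : V →ₗ[ℂ] V →ₗ[ℂ] V) : Prop :=
  (∀ x y z : V, mul (mul x y) z - mul x (mul y z) = mul (mul y x) z - mul y (mul x z)) ∧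
  (∀ x y z : V, mul (mul z x) y = mul (mul z y) x)

/-- Supercommutator of elements of parities `i`, `j`. -/
def sbr {V : Type*} [AddCommGroup V] [Module ℂ V]
    (mul : V →ₗ[ℂ] V →ₗ[ℂ] V) (i j : ZMod 2) (u v : V) : V :=
  mul u v - ((-1 : ℂ) ^ (i.val * j.val)) • mul v u

/-!
Expanding the supercommutator, each axiom of a super Gel'fand–Dorfman algebra becomes a
linear combination of instances of the two Novikov identities: super-antisymmetry needs no
axiom at all, the super Jacobi identity follows from graded left-symmetry alone (the cyclic
sum of three of its instances), and the compatibility identity from one instance of graded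
right-commutativity and two of left-symmetry. The coefficients only involve the Koszul signs
`(-1) ^ (|u| |v|)`, which are bimultiplicative in the parities and square to `1`.
-/

lemma neg_one_pow_val_mul_self (i j : ZMod 2) :
    (-1 : ℂ) ^ (i.val * j.val) * (-1 : ℂ) ^ (i.val * j.val) = 1 := by
  rw [← pow_add, ← two_mul, pow_mul]
  norm_num

lemma neg_one_pow_val_add_mul (i j k : ZMod 2) :
    (-1 : ℂ) ^ ((i + j).val * k.val) = (-1 : ℂ) ^ (i.val * k.val) * (-1 : ℂ) ^ (j.val * k.val) := by
  have h : (i + j).val * k.val % 2 = (i.val * k.val + j.val * k.val) % 2 := by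
    revert i j k
    decide
  rw [← pow_add, neg_one_pow_eq_pow_mod_two, h, ← neg_one_pow_eq_pow_mod_two]

lemma neg_one_pow_val_mul_add (i j k : ZMod 2) :
    (-1 : ℂ) ^ (i.val * (j + k).val) = (-1 : ℂ) ^ (i.val * j.val) * (-1 : ℂ) ^ (i.val * k.val) := by
  rw [mul_comm, neg_one_pow_val_add_mul, mul_comm j.val, mul_comm k.val]

section SuperBracket

variable {V : Type*} [AddCommGroup V] [Module ℂ V]

def IsSuperLeftSymmetric (mul : V →ₗ[ℂ] V →ₗ[ℂ] V) (grading : ZMod 2 → Submodule ℂ V) :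
    Prop :=
  ∀ i j : ZMod 2, ∀ u ∈ grading i, ∀ v ∈ grading j, ∀ w : V,
    mul (mul u v) w - mul u (mul v w)
      = ((-1 : ℂ) ^ (i.val * j.val)) • (mul (mul v u) w - mul v (mul u w))

def IsSuperRightCommutative (mul : V →ₗ[ℂ] V →ₗ[ℂ] V) (grading : ZMod 2 → Submodule ℂ V) :
    Prop :=
  ∀ i j : ZMod 2, ∀ u ∈ grading i, ∀ v ∈ grading j, ∀ w : V,
    mul (mul w u) v = ((-1 : ℂ) ^ (i.val * j.val)) • mul (mul w v) u

theorem sbr_eq_neg_smul_sbr (mul : V →ₗ[ℂ] V →ₗ[ℂ] V) (i j : ZMod 2) (u v : V) :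
    sbr mul i j u v = -(((-1 : ℂ) ^ (i.val * j.val)) • sbr mul j i v u) := by
  have hij := neg_one_pow_val_mul_self i j
  simp only [sbr, Nat.mul_comm j.val i.val]
  generalize (-1 : ℂ) ^ (i.val * j.val) = a at *
  match_scalars <;> grind

theorem sbr_jacobi {mul : V →ₗ[ℂ] V →ₗ[ℂ] V} {grading : ZMod 2 → Submodule ℂ V}
    (hmul : IsSuperLeftSymmetric mul grading) {i j k : ZMod 2} {u v w : V}
    (hu : u ∈ grading i) (hv : v ∈ grading j) (hw : w ∈ grading k) :
    ((-1 : ℂ) ^ (i.val * k.val)) • sbr mul i (j + k) u (sbr mul j k v w)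
      + ((-1 : ℂ) ^ (j.val * i.val)) • sbr mul j (k + i) v (sbr mul k i w u)
      + ((-1 : ℂ) ^ (k.val * j.val)) • sbr mul k (i + j) w (sbr mul i j u v) = 0 := by
  have huvw := hmul i j u hu v hv w
  have hvwu := hmul j k v hv w hw u
  have hwuv := hmul k i w hw u hu v
  have hij := neg_one_pow_val_mul_self i j
  have hjk := neg_one_pow_val_mul_self j k
  have hik := neg_one_pow_val_mul_self i k
  simp only [sbr, map_sub, map_smul, LinearMap.sub_apply, LinearMap.smul_apply,
    neg_one_pow_val_add_mul, neg_one_pow_val_mul_add, Nat.mul_comm k.val,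
    Nat.mul_comm j.val i.val] at *
  -- Once every sign is a product of these three, `grind` reduces the coefficients modulo
  -- `a * a = 1`, `b * b = 1`, `c * c = 1`.
  generalize (-1 : ℂ) ^ (i.val * j.val) = a at *
  generalize (-1 : ℂ) ^ (j.val * k.val) = b at *
  generalize (-1 : ℂ) ^ (i.val * k.val) = c at *
  linear_combination (norm := skip) (-c) • huvw + (-a) • hvwu + (-b) • hwuv
  match_scalars <;> grind

theorem sbr_compatibility {mul : V →ₗ[ℂ] V →ₗ[ℂ] V} {grading : ZMod 2 → Submodule ℂ V}
    (hleft : IsSuperLeftSymmetric mul grading) (hright : IsSuperRightCommutative mul grading)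
    {i j k : ZMod 2} {u v w : V}
    (hu : u ∈ grading i) (hv : v ∈ grading j) (hw : w ∈ grading k) :
    sbr mul (k + i) j (mul w u) v
      - ((-1 : ℂ) ^ (i.val * j.val)) • sbr mul (k + j) i (mul w v) u
      + mul (sbr mul k i w u) v
      - ((-1 : ℂ) ^ (i.val * j.val)) • mul (sbr mul k j w v) u
      - mul w (sbr mul i j u v) = 0 := by
  have hwuv := hright i j u hu v hv w
  have huwv := hleft i k u hu w hw v
  have hvwu := hleft j k v hv w hw u
  have hij := neg_one_pow_val_mul_self i j
  have hjk := neg_one_pow_val_mul_self j k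
  have hik := neg_one_pow_val_mul_self i k
  simp only [sbr, map_sub, map_smul, LinearMap.sub_apply, LinearMap.smul_apply,
    neg_one_pow_val_add_mul, Nat.mul_comm k.val, Nat.mul_comm j.val i.val] at *
  generalize (-1 : ℂ) ^ (i.val * j.val) = a at *
  generalize (-1 : ℂ) ^ (j.val * k.val) = b at *
  generalize (-1 : ℂ) ^ (i.val * k.val) = c at *
  linear_combination (norm := skip) hwuv - c • huwv + (a * b) • hvwu
  match_scalars <;> grind

end SuperBracket

/-- a Novikov superalgebra together with its supercommutator is a
super Gel'fand-Dorfman algebra: the supercommutator is a Lie super bracket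
(super-antisymmetry and super Jacobi) and the compatibility identity
`[w∘u,v] − (−1)^{ij}[w∘v,u] + [w,u]∘v − (−1)^{ij}[w,v]∘u − w∘[u,v] = 0` holds. -/
theorem novikov_super_gelfand_dorfman {V : Type*} [AddCommGroup V] [Module ℂ V]
    (N : NovikovSuperAlgebra V) :
    (∀ i j : ZMod 2, ∀ u ∈ N.grading i, ∀ v ∈ N.grading j,
      sbr N.mul i j u v = -(((-1 : ℂ) ^ (i.val * j.val)) • sbr N.mul j i v u)) ∧
    (∀ i j k : ZMod 2, ∀ u ∈ N.grading i, ∀ v ∈ N.grading j, ∀ w ∈ N.grading k,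
      ((-1 : ℂ) ^ (i.val * k.val)) • sbr N.mul i (j + k) u (sbr N.mul j k v w)
        + ((-1 : ℂ) ^ (j.val * i.val)) • sbr N.mul j (k + i) v (sbr N.mul k i w u)
        + ((-1 : ℂ) ^ (k.val * j.val)) • sbr N.mul k (i + j) w (sbr N.mul i j u v) = 0) ∧
    (∀ i j k : ZMod 2, ∀ u ∈ N.grading i, ∀ v ∈ N.grading j, ∀ w ∈ N.grading k,
      sbr N.mul (k + i) j (N.mul w u) v
        - ((-1 : ℂ) ^ (i.val * j.val)) • sbr N.mul (k + j) i (N.mul w v) u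
        + N.mul (sbr N.mul k i w u) v
        - ((-1 : ℂ) ^ (i.val * j.val)) • N.mul (sbr N.mul k j w v) u
        - N.mul w (sbr N.mul i j u v) = 0) := by
  exact ⟨fun i j u _ v _ => sbr_eq_neg_smul_sbr N.mul i j u v,
    fun _ _ _ _ hu _ hv _ hw => sbr_jacobi N.super_left_sym hu hv hw,
    fun _ _ _ _ hu _ hv _ hw => sbr_compatibility N.super_left_sym N.super_right_comm hu hv hw⟩
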